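/- arXiv:1608.08613 — 3 statements merged into one kernel-verified Lean document; each statement's English description precedes it below -/
import Mathlib

section
/- For every n ≥ 1, (1-q₁)(1-q₂)(1-qⁿ)/(1-q) = ∑_{λ⊢n} (∏_{i=1}^{t} (1-q₁^{n_i})(1-q₂^{n_i}))/z_λ, where the sum is over all partitions λ = (n₁ ≥ ... ≥ n_t) of n, q = q₁q₂, and z_λ = ∏_{i}(number of parts of λ equal to i)! · ∏_{i=1}^{t} n_i. -/
/-- The standard normalization constant `z_λ = ∏_i m_i(λ)! · ∏_i n_i` of a partition. -/
def zlam {n : ℕ} (p : n.Partition) : ℕ :=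
  (∏ i ∈ p.parts.toFinset, (p.parts.count i).factorial) * p.parts.prod

/-!
Write `p_m = (1 - q₁^m)(1 - q₂^m)`. Both sides, extended by `1` at `n = 0`, satisfy
`n a_n = ∑_{m=1}^n p_m a_{n-m}`, which determines the sequence in characteristic zero.
For the partition sum, write `n = ∑_m m · m_m(λ)` and remove one part `m` from `λ`:
this divides `z_λ` by `m · m_m(λ)`. For the closed form, the recursion is the coefficientwise
form of `t S'(t) / S(t) = ∑_m p_m t^m` for `S(t) = (1 - q₁t)(1 - q₂t) / ((1 - t)(1 - q₁q₂t))`,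
and is checked by induction on `n`.
-/

open Finset Nat

theorem Multiset.prod_count_factorial_cons (m : ℕ) (s : Multiset ℕ) :
    ∏ i ∈ (m ::ₘ s).toFinset, ((m ::ₘ s).count i)! =
      (s.count m + 1) * ∏ i ∈ s.toFinset, (s.count i)! := by
  have hm : m ∈ (m ::ₘ s).toFinset := by simp
  have hext : ∏ i ∈ s.toFinset, (s.count i)! = ∏ i ∈ (m ::ₘ s).toFinset, (s.count i)! :=
    prod_subset (by simp [Multiset.toFinset_cons]) fun i _ hi => by
      simp [Multiset.count_eq_zero_of_notMem (by simpa using hi)]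
  rw [hext, ← mul_prod_erase _ _ hm, ← mul_prod_erase _ (fun i => (s.count i)!) hm,
    Multiset.count_cons_self, factorial_succ, mul_assoc]
  congr 2
  exact prod_congr rfl fun i hi => by rw [Multiset.count_cons_of_ne (ne_of_mem_erase hi)]

namespace Nat.Partition

theorem sum_count_mul {n : ℕ} (p : n.Partition) :
    ∑ m ∈ p.parts.toFinset, p.parts.count m * m = n := by
  simpa [smul_eq_mul, p.parts_sum] using (Finset.sum_multiset_count p.parts).symm

theorem zlam_pos {n : ℕ} (p : n.Partition) : 0 < zlam p :=
  Nat.mul_pos (prod_pos fun _ _ => factorial_pos _) (Multiset.prod_pos fun _ hi => p.parts_pos hi)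

theorem zlam_partitionWithPartEquiv_symm {n m : ℕ} (hm : 1 ≤ m) (hmn : m ≤ n)
    (μ : (n - m).Partition) :
    zlam ((partitionWithPartEquiv hm hmn).symm μ).1 = m * (μ.parts.count m + 1) * zlam μ := by
  simp only [zlam, partitionWithPartEquiv_symm_apply_parts, Multiset.prod_count_factorial_cons,
    Multiset.prod_cons]
  ring

end Nat.Partition

section PartitionSum

variable {F : Type*} [Field F]

noncomputable def partitionSum (f : ℕ → F) (n : ℕ) : F :=
  ∑ p : n.Partition, (p.parts.map f).prod / (zlam p : F)

theorem partitionSum_zero (f : ℕ → F) : partitionSum f 0 = 1 := by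
  simp [partitionSum, zlam]

variable [CharZero F]

theorem natCast_mul_partitionSum (f : ℕ → F) (n : ℕ) :
    (n : F) * partitionSum f n = ∑ m ∈ Icc 1 n, f m * partitionSum f (n - m) := by
  have hcount (p : n.Partition) :
      (n : F) * ((p.parts.map f).prod / (zlam p : F)) =
        ∑ m ∈ p.parts.toFinset, (p.parts.count m * m : F) * ((p.parts.map f).prod / (zlam p : F)) := by
    rw [← sum_mul]; congr 1; exact_mod_cast p.sum_count_mul.symm
  calc (n : F) * partitionSum f n
      = ∑ p : n.Partition, ∑ m ∈ p.parts.toFinset,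
          (p.parts.count m * m : F) * ((p.parts.map f).prod / (zlam p : F)) := by
        rw [partitionSum, mul_sum]; exact sum_congr rfl fun p _ => hcount p
    _ = ∑ m ∈ Icc 1 n, ∑ p ∈ univ.filter (m ∈ ·.parts),
          (p.parts.count m * m : F) * ((p.parts.map f).prod / (zlam p : F)) :=
        sum_comm' fun p m => by
          simp only [mem_univ, true_and, Multiset.mem_toFinset, mem_filter, mem_Icc]
          exact ⟨fun h => ⟨h, p.parts_pos h, p.le_of_mem_parts h⟩, fun h => h.1⟩
    _ = ∑ m ∈ Icc 1 n, f m * partitionSum f (n - m) := sum_congr rfl fun m hm => by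
        obtain ⟨h1, h2⟩ := mem_Icc.mp hm
        rw [partitionSum, mul_sum, sum_subtype (p := fun p : n.Partition => m ∈ p.parts) _
          (by simp), ← (Partition.partitionWithPartEquiv h1 h2).symm.sum_comp]
        refine sum_congr rfl fun μ _ => ?_
        have hz : (zlam μ : F) ≠ 0 := by exact_mod_cast (Partition.zlam_pos μ).ne'
        have hm0 : (m : F) ≠ 0 := by exact_mod_cast (by omega : m ≠ 0)
        simp only [Partition.zlam_partitionWithPartEquiv_symm,
          Partition.partitionWithPartEquiv_symm_apply_parts, Multiset.map_cons,
          Multiset.prod_cons, Multiset.count_cons_self]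
        push_cast
        field_simp

end PartitionSum

theorem eq_of_natCast_mul_eq_sum {R : Type*} [CommRing R] [IsDomain R] [CharZero R] (f : ℕ → R)
    {a b : ℕ → R} (h0 : a 0 = b 0) (ha : ∀ n : ℕ, (n : R) * a n = ∑ m ∈ Icc 1 n, f m * a (n - m))
    (hb : ∀ n : ℕ, (n : R) * b n = ∑ m ∈ Icc 1 n, f m * b (n - m)) : a = b := by
  funext n
  induction n using Nat.strong_induction_on with
  | _ n ih =>
    rcases n.eq_zero_or_pos with rfl | hn
    · exact h0
    · refine mul_left_cancel₀ (Nat.cast_ne_zero.mpr hn.ne') ?_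
      rw [ha, hb]
      exact sum_congr rfl fun m hm => by rw [ih (n - m) (by grind)]

section PowerSumEval

variable {R : Type*} [CommRing R]

def powerSumEval (q₁ q₂ : R) (m : ℕ) : R := (1 - q₁ ^ m) * (1 - q₂ ^ m)

-- `∑_{m=1}^n p_m` in closed form, multiplied by `(1 - q₁q₂) p_1` to avoid division
theorem mul_sum_Icc_powerSumEval (q₁ q₂ : R) (n : ℕ) :
    (1 - q₁ * q₂) * powerSumEval q₁ q₂ 1 * ∑ m ∈ Icc 1 n, powerSumEval q₁ q₂ m =
      powerSumEval q₁ q₂ 1 * ((n + 1) * (1 - q₁ * q₂) + q₁ * q₂ * (1 - (q₁ * q₂) ^ n)) -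
        (1 - q₁ * q₂) * (powerSumEval q₁ q₂ (n + 1) - q₁ * q₂ * powerSumEval q₁ q₂ n) := by
  induction n with
  | zero => simp [powerSumEval]; ring
  | succ n ih =>
    rw [sum_Icc_succ_top (by omega), mul_add, ih]
    simp only [powerSumEval]
    push_cast
    ring

theorem mul_sum_Icc_powerSumEval_mul_one_sub_pow (q₁ q₂ : R) (n : ℕ) :
    powerSumEval q₁ q₂ 1 * ∑ m ∈ Icc 1 n, powerSumEval q₁ q₂ m * (1 - (q₁ * q₂) ^ (n - m)) =
      n * powerSumEval q₁ q₂ 1 * (1 - (q₁ * q₂) ^ n) - (1 - q₁ * q₂) * powerSumEval q₁ q₂ n := by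
  induction n with
  | zero => simp [powerSumEval]
  | succ n ih =>
    have hsplit : ∑ m ∈ Icc 1 (n + 1), powerSumEval q₁ q₂ m * (1 - (q₁ * q₂) ^ (n + 1 - m)) =
        (1 - q₁ * q₂) * ∑ m ∈ Icc 1 n, powerSumEval q₁ q₂ m +
          q₁ * q₂ * ∑ m ∈ Icc 1 n, powerSumEval q₁ q₂ m * (1 - (q₁ * q₂) ^ (n - m)) := by
      rw [sum_Icc_succ_top (by omega), Nat.sub_self, pow_zero, sub_self, mul_zero, add_zero,
        mul_sum, mul_sum, ← sum_add_distrib]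
      refine sum_congr rfl fun m hm => ?_
      rw [show n + 1 - m = n - m + 1 by grind, pow_succ]
      ring
    rw [hsplit]
    push_cast
    linear_combination q₁ * q₂ * ih + mul_sum_Icc_powerSumEval q₁ q₂ n

end PowerSumEval

section ClosedForm

variable {F : Type*} [Field F]

noncomputable def partitionSumClosedForm (q₁ q₂ : F) (n : ℕ) : F :=
  if n = 0 then 1 else powerSumEval q₁ q₂ 1 * (1 - (q₁ * q₂) ^ n) / (1 - q₁ * q₂)

theorem partitionSumClosedForm_zero (q₁ q₂ : F) : partitionSumClosedForm q₁ q₂ 0 = 1 := rfl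

theorem natCast_mul_partitionSumClosedForm {q₁ q₂ : F} (hq : q₁ * q₂ ≠ 1) (n : ℕ) :
    (n : F) * partitionSumClosedForm q₁ q₂ n =
      ∑ m ∈ Icc 1 n, powerSumEval q₁ q₂ m * partitionSumClosedForm q₁ q₂ (n - m) := by
  rcases n with _ | k
  · simp
  have hq' : 1 - q₁ * q₂ ≠ 0 := sub_ne_zero.mpr hq.symm
  have hU := mul_sum_Icc_powerSumEval_mul_one_sub_pow q₁ q₂ (k + 1)
  rw [sum_Icc_succ_top (by omega), Nat.sub_self, pow_zero, sub_self, mul_zero, add_zero] at hU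
  rw [sum_Icc_succ_top (by omega), Nat.sub_self, sum_congr rfl fun m hm => by
    rw [partitionSumClosedForm, if_neg (by grind)]]
  have hsum : ∑ m ∈ Icc 1 k, powerSumEval q₁ q₂ m *
      (powerSumEval q₁ q₂ 1 * (1 - (q₁ * q₂) ^ (k + 1 - m)) / (1 - q₁ * q₂)) =
      (powerSumEval q₁ q₂ 1 *
        ∑ m ∈ Icc 1 k, powerSumEval q₁ q₂ m * (1 - (q₁ * q₂) ^ (k + 1 - m))) / (1 - q₁ * q₂) := by
    rw [mul_sum, sum_div]; exact sum_congr rfl fun _ _ => by ring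
  rw [hsum, partitionSumClosedForm_zero, partitionSumClosedForm, if_neg k.succ_ne_zero]
  field_simp
  linear_combination -hU

end ClosedForm

/-- For every `n ≥ 1`,
`(1-q₁)(1-q₂)(1-qⁿ)/(1-q) = ∑_{λ ⊢ n} (∏_{i=1}^t (1-q₁^{n_i})(1-q₂^{n_i}))/z_λ`,
where `q = q₁q₂` and the sum runs over all partitions `λ = (n₁ ≥ ... ≥ n_t)` of `n`. -/
theorem partition_sum_identity {F : Type*} [Field F] [CharZero F] (q₁ q₂ : F)
    (hq : q₁ * q₂ ≠ 1) (n : ℕ) (hn : 1 ≤ n) :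
    (1 - q₁) * (1 - q₂) * (1 - (q₁ * q₂) ^ n) / (1 - q₁ * q₂) =
      ∑ p : n.Partition,
        (p.parts.map (fun m => (1 - q₁ ^ m) * (1 - q₂ ^ m))).prod / (zlam p : F) := by
  have h := eq_of_natCast_mul_eq_sum (powerSumEval q₁ q₂)
    (by rw [partitionSumClosedForm_zero, partitionSum_zero])
    (natCast_mul_partitionSumClosedForm hq) (natCast_mul_partitionSum (powerSumEval q₁ q₂))
  have hn' := congrFun h n
  rw [partitionSumClosedForm, if_neg (by omega), powerSumEval, pow_one, pow_one] at hn'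
  exact hn'
end

section
/- Define bosons b_n^i (1 ≤ i ≤ r, n ∈ ℤ∖{0}) with relations [b_{-n}^i, b_n^j] = n(1-q₁ⁿ)(1-q₂ⁿ)·c_{ij}(n) for n > 0, where c_{ij}(n) = 1-q^{-n} if i < j, 1 if i = j, 0 if i > j, and all other commutators zero. Set p_n = ∑_{i=1}^{r} b_n^i q^{n(i-1)} and h_n^i = b_n^i − p_n(1-qⁿ)/(1-q^{rn}). Then [p_m, h_n^i] = 0 for all m, n ∈ ℤ∖{0} and all i. -/
/-!
Write `D(n) = n(1-q₁ⁿ)(1-q₂ⁿ)`. The commutator `[p_m, b_n^j]` is a scalar independent of `j`: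
it vanishes unless `m + n = 0`, and for `m = -n` it is a sum of the structure constants
`c_{lj}(|n|)` weighted by powers of `q`, which telescopes to `D(n)` if `n > 0` and to
`-D(m) q^{m(r-1)}` if `m > 0`. Calling this scalar `K`, and using
`(1-qⁿ)/(1-q^{rn}) · ∑_l q^{nl} = 1`, we get `[p_m, h_n^i] = K - K = 0`.
-/

open Finset

theorem sum_range_pow_mul_ite_lt {R : Type*} [CommRing R] (s : R) {r i : ℕ} (hi : i < r) :
    ∑ l ∈ range r, s ^ l * (if l < i then 1 - s else if l = i then 1 else 0) = 1 := by
  have hvanish : ∀ l ∈ range r, l ∉ range (i + 1) →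
      s ^ l * (if l < i then 1 - s else if l = i then 1 else 0) = 0 := by
    intro l _ hl
    rw [mem_range] at hl
    rw [if_neg (by omega), if_neg (by omega), mul_zero]
  rw [← sum_subset (range_subset_range.2 hi) hvanish, sum_range_succ, if_neg (lt_irrefl i),
    if_pos rfl, mul_one, sum_congr rfl fun l hl => by rw [if_pos (mem_range.1 hl)], ← sum_mul,
    mul_comm, mul_neg_geom_sum, sub_add_cancel]

section Field
variable {F : Type*} [Field F]

theorem sum_range_pow_mul_ite_gt {t : F} (ht : t ≠ 0) {r i : ℕ} (hi : i < r) :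
    ∑ l ∈ range r, t ^ l * (if i < l then 1 - t⁻¹ else if i = l then 1 else 0) =
      t ^ (r - 1) := by
  obtain ⟨r, rfl⟩ : ∃ k, r = k + 1 := ⟨r - 1, by omega⟩
  have hhead : ∑ l ∈ range (i + 1), t ^ l * (if i < l then 1 - t⁻¹ else if i = l then 1 else 0) =
      t ^ i := by
    rw [sum_range_succ, sum_eq_zero fun l hl => by
      rw [mem_range] at hl; rw [if_neg (by omega), if_neg (by omega), mul_zero]]
    simp
  have htail : ∑ l ∈ Ico (i + 1) (r + 1),
      t ^ l * (if i < l then 1 - t⁻¹ else if i = l then 1 else 0) = t ^ r - t ^ i := by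
    rw [sum_congr rfl fun l hl => by rw [if_pos (by rw [mem_Ico] at hl; omega)], ← sum_mul,
      show 1 - t⁻¹ = (t - 1) * t⁻¹ by field_simp, ← mul_assoc, geom_sum_Ico_mul _ (by omega)]
    field_simp
    ring
  rw [← sum_range_add_sum_Ico _ (by omega : i + 1 ≤ r + 1), hhead, htail, Nat.add_sub_cancel]
  ring

theorem div_one_sub_zpow_mul_sum_zpow {q : F} {n : ℤ} {r : ℕ} (h : q ^ ((r : ℤ) * n) ≠ 1) :
    (1 - q ^ n) / (1 - q ^ ((r : ℤ) * n)) * ∑ l : Fin r, q ^ (n * (l : ℤ)) = 1 := by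
  simp only [mul_comm (r : ℤ) n, zpow_mul, zpow_natCast] at h ⊢
  rw [Fin.sum_univ_eq_sum_range ((q ^ n) ^ ·), div_mul_eq_mul_div, mul_neg_geom_sum,
    div_self (sub_ne_zero.2 h.symm)]

end Field

/-! `⁅x, y⁆` is the ring commutator `x * y - y * x` (`Ring.lie_def`). -/

section Commutator
variable {F A : Type*} [CommRing F] [Ring A] [Algebra F A]

theorem sum_algebraMap_mul_lie {ι : Type*} (s : Finset ι) (a : ι → F) (x : ι → A) (z : A) :
    ⁅∑ l ∈ s, algebraMap F A (a l) * x l, z⁆ = ∑ l ∈ s, algebraMap F A (a l) * ⁅x l, z⁆ := by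
  let ad : A →ₗ[F] A := LinearMap.mulRight F z - LinearMap.mulLeft F z
  change ad _ = ∑ l ∈ s, algebraMap F A (a l) * ad (x l)
  simp only [← Algebra.smul_def, map_sum, map_smul]

theorem lie_sub_algebraMap_mul_sum_eq_zero {ι : Type*} {s : Finset ι} {x : A} {y : ι → A} {K : F}
    (hK : ∀ j ∈ s, ⁅x, y j⁆ = algebraMap F A K) {w : ι → F} {c : F}
    (hc : c * ∑ j ∈ s, w j = 1) {i : ι} (hi : i ∈ s) :
    ⁅x, y i - algebraMap F A c * ∑ j ∈ s, algebraMap F A (w j) * y j⁆ = 0 := by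
  let ad : A →ₗ[F] A := LinearMap.mulLeft F x - LinearMap.mulRight F x
  change ad _ = 0
  simp only [← Algebra.smul_def, map_sub, map_smul, map_sum]
  change ⁅x, y i⁆ - c • ∑ j ∈ s, w j • ⁅x, y j⁆ = 0
  rw [sum_congr rfl fun j hj => by rw [hK j hj], hK i hi, ← sum_smul, smul_smul, hc, one_smul,
    sub_self]

end Commutator

/-- `p_m = ∑_l q^{m l} b_m^l`; the colour `l` runs over `0, …, r - 1`, matching `q^{m(i-1)}` for
`i = 1, …, r` in the paper. -/
def pBoson {F A : Type*} [Field F] [Ring A] [Algebra F A] {r : ℕ} (q : F) (b : Fin r → ℤ → A)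
    (m : ℤ) : A :=
  ∑ l : Fin r, algebraMap F A (q ^ (m * (l : ℤ))) * b l m

section Bosons
variable {F A : Type*} [Field F] [Ring A] [Algebra F A] {r : ℕ} {q : F} {b : Fin r → ℤ → A}
  {D : ℕ → F}

theorem lie_pBoson_eq_zero
    (hcomm : ∀ (i j : Fin r) (m n : ℤ), m ≠ 0 → n ≠ 0 → m + n ≠ 0 → Commute (b i m) (b j n))
    {m n : ℤ} (hm : m ≠ 0) (hn : n ≠ 0) (hmn : m + n ≠ 0) (j : Fin r) :
    ⁅pBoson q b m, b j n⁆ = 0 := by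
  rw [pBoson, sum_algebraMap_mul_lie]
  exact sum_eq_zero fun l _ => by rw [(hcomm l j m n hm hn hmn).lie_eq, mul_zero]

theorem lie_pBoson_neg_natCast
    (hrel : ∀ (i j : Fin r) (n : ℕ), 0 < n → ⁅b i (-(n : ℤ)), b j (n : ℤ)⁆ =
      algebraMap F A (D n * (if i < j then 1 - (q ^ n)⁻¹ else if i = j then 1 else 0)))
    {d : ℕ} (hd : 0 < d) (j : Fin r) :
    ⁅pBoson q b (-(d : ℤ)), b j (d : ℤ)⁆ = algebraMap F A (D d) := by
  rw [pBoson, sum_algebraMap_mul_lie]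
  simp only [hrel _ j d hd, ← map_mul, ← map_sum]
  congr 1
  have hpow : ∀ l : ℕ, q ^ (-(d : ℤ) * l) = (q ^ d)⁻¹ ^ l := fun l => by
    rw [neg_mul, zpow_neg, zpow_mul, zpow_natCast, zpow_natCast, inv_pow]
  simp only [hpow, Fin.lt_def, Fin.ext_iff, mul_left_comm _ (D d), ← mul_sum]
  rw [Fin.sum_univ_eq_sum_range (fun l => (q ^ d)⁻¹ ^ l *
      (if l < (j : ℕ) then 1 - (q ^ d)⁻¹ else if l = (j : ℕ) then 1 else 0)),
    sum_range_pow_mul_ite_lt _ j.isLt, mul_one]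

theorem lie_pBoson_natCast (hq : q ≠ 0)
    (hrel : ∀ (i j : Fin r) (n : ℕ), 0 < n → ⁅b i (-(n : ℤ)), b j (n : ℤ)⁆ =
      algebraMap F A (D n * (if i < j then 1 - (q ^ n)⁻¹ else if i = j then 1 else 0)))
    {d : ℕ} (hd : 0 < d) (j : Fin r) :
    ⁅pBoson q b (d : ℤ), b j (-(d : ℤ))⁆ = algebraMap F A (-(D d * (q ^ d) ^ (r - 1))) := by
  have hswap : ∀ l : Fin r, ⁅b l (d : ℤ), b j (-(d : ℤ))⁆ = algebraMap F A
      (-(D d * (if j < l then 1 - (q ^ d)⁻¹ else if j = l then 1 else 0))) := fun l => by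
    rw [map_neg, ← hrel j l d hd]
    exact (neg_sub _ _).symm
  rw [pBoson, sum_algebraMap_mul_lie]
  simp only [hswap, ← map_mul, ← map_sum]
  congr 1
  simp only [zpow_mul, zpow_natCast, Fin.lt_def, Fin.ext_iff, mul_neg, mul_left_comm _ (D d),
    sum_neg_distrib, ← mul_sum]
  rw [Fin.sum_univ_eq_sum_range (fun l => (q ^ d) ^ l *
      (if (j : ℕ) < l then 1 - (q ^ d)⁻¹ else if (j : ℕ) = l then 1 else 0)),
    sum_range_pow_mul_ite_gt (pow_ne_zero d hq) j.isLt]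

theorem exists_lie_pBoson_eq_algebraMap (hq : q ≠ 0)
    (hcomm : ∀ (i j : Fin r) (m n : ℤ), m ≠ 0 → n ≠ 0 → m + n ≠ 0 → Commute (b i m) (b j n))
    (hrel : ∀ (i j : Fin r) (n : ℕ), 0 < n → ⁅b i (-(n : ℤ)), b j (n : ℤ)⁆ =
      algebraMap F A (D n * (if i < j then 1 - (q ^ n)⁻¹ else if i = j then 1 else 0)))
    {m n : ℤ} (hm : m ≠ 0) (hn : n ≠ 0) :
    ∃ K : F, ∀ j, ⁅pBoson q b m, b j n⁆ = algebraMap F A K := by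
  by_cases hmn : m + n = 0
  · rcases hn.lt_or_gt with hneg | hpos
    · obtain ⟨d, rfl⟩ : ∃ d : ℕ, m = d := ⟨m.toNat, by omega⟩
      obtain rfl : n = -d := by omega
      exact ⟨_, lie_pBoson_natCast hq hrel (by omega)⟩
    · obtain ⟨d, rfl⟩ : ∃ d : ℕ, n = d := ⟨n.toNat, by omega⟩
      obtain rfl : m = -d := by omega
      exact ⟨_, lie_pBoson_neg_natCast hrel (by omega)⟩
  · exact ⟨0, fun j => by rw [map_zero]; exact lie_pBoson_eq_zero hcomm hm hn hmn j⟩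

end Bosons

theorem p_commutes_with_h_general {F : Type*} [Field F] {A : Type*} [Ring A] [Algebra F A]
    (q₁ q₂ : F) (hq0 : q₁ * q₂ ≠ 0) (hgen : ∀ n : ℤ, n ≠ 0 → (q₁ * q₂) ^ n ≠ 1)
    (r : ℕ) (b : Fin r → ℤ → A)
    (hcomm : ∀ (i j : Fin r) (m n : ℤ), m ≠ 0 → n ≠ 0 → m + n ≠ 0 →
      b i m * b j n = b j n * b i m)
    (hrel : ∀ (i j : Fin r) (n : ℕ), 0 < n →
      b i (-(n : ℤ)) * b j (n : ℤ) - b j (n : ℤ) * b i (-(n : ℤ)) =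
        algebraMap F A ((n : F) * (1 - q₁ ^ n) * (1 - q₂ ^ n) *
          (if i < j then 1 - ((q₁ * q₂) ^ n)⁻¹ else if i = j then 1 else 0))) :
    ∀ (m n : ℤ), m ≠ 0 → n ≠ 0 → ∀ i : Fin r,
      (∑ l : Fin r, algebraMap F A ((q₁ * q₂) ^ (m * (l : ℤ))) * b l m) *
        (b i n - algebraMap F A ((1 - (q₁ * q₂) ^ n) / (1 - (q₁ * q₂) ^ ((r : ℤ) * n))) *
          ∑ l : Fin r, algebraMap F A ((q₁ * q₂) ^ (n * (l : ℤ))) * b l n) =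
      (b i n - algebraMap F A ((1 - (q₁ * q₂) ^ n) / (1 - (q₁ * q₂) ^ ((r : ℤ) * n))) *
          ∑ l : Fin r, algebraMap F A ((q₁ * q₂) ^ (n * (l : ℤ))) * b l n) *
        (∑ l : Fin r, algebraMap F A ((q₁ * q₂) ^ (m * (l : ℤ))) * b l m) := by
  intro m n hm hn i
  obtain ⟨K, hK⟩ := exists_lie_pBoson_eq_algebraMap
    (D := fun n : ℕ => (n : F) * (1 - q₁ ^ n) * (1 - q₂ ^ n)) hq0 hcomm hrel hm hn
  have hrn : (r : ℤ) * n ≠ 0 := mul_ne_zero (by exact_mod_cast i.pos.ne') hn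
  rw [← sub_eq_zero]
  exact lie_sub_algebraMap_mul_sum_eq_zero (fun j _ => hK j)
    (div_one_sub_zpow_mul_sum_zpow (hgen _ hrn)) (mem_univ i)

/-- In the gl_r deformed Heisenberg algebra with bosons `b_n^i` satisfying
`[b_{-n}^i, b_n^j] = n(1-q₁ⁿ)(1-q₂ⁿ)·(1-q^{-n} if i<j; 1 if i=j; 0 if i>j)` (n>0) and all
other commutators zero, setting `p_n = ∑_i b_n^i q^{n(i-1)}` and
`h_n^i = b_n^i - p_n (1-qⁿ)/(1-q^{rn})`, one has `[p_m, h_n^i] = 0` for all `m,n ≠ 0`. -/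
theorem p_commutes_with_h {F : Type*} [Field F] {A : Type*} [Ring A] [Algebra F A]
    (q₁ q₂ : F) (hq0 : q₁ * q₂ ≠ 0) (hgen : ∀ n : ℤ, n ≠ 0 → (q₁ * q₂) ^ n ≠ 1)
    (r : ℕ) (hr : 0 < r) (b : Fin r → ℤ → A)
    (hcomm : ∀ (i j : Fin r) (m n : ℤ), m ≠ 0 → n ≠ 0 → m + n ≠ 0 →
      b i m * b j n = b j n * b i m)
    (hrel : ∀ (i j : Fin r) (n : ℕ), 0 < n →
      b i (-(n : ℤ)) * b j (n : ℤ) - b j (n : ℤ) * b i (-(n : ℤ)) =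
        algebraMap F A ((n : F) * (1 - q₁ ^ n) * (1 - q₂ ^ n) *
          (if i < j then 1 - ((q₁ * q₂) ^ n)⁻¹ else if i = j then 1 else 0))) :
    ∀ (m n : ℤ), m ≠ 0 → n ≠ 0 → ∀ i : Fin r,
      (∑ l : Fin r, algebraMap F A ((q₁ * q₂) ^ (m * (l : ℤ))) * b l m) *
        (b i n - algebraMap F A ((1 - (q₁ * q₂) ^ n) / (1 - (q₁ * q₂) ^ ((r : ℤ) * n))) *
          ∑ l : Fin r, algebraMap F A ((q₁ * q₂) ^ (n * (l : ℤ))) * b l n) =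
      (b i n - algebraMap F A ((1 - (q₁ * q₂) ^ n) / (1 - (q₁ * q₂) ^ ((r : ℤ) * n))) *
          ∑ l : Fin r, algebraMap F A ((q₁ * q₂) ^ (n * (l : ℤ))) * b l n) *
        (∑ l : Fin r, algebraMap F A ((q₁ * q₂) ^ (m * (l : ℤ))) * b l m) :=
  p_commutes_with_h_general q₁ q₂ hq0 hgen r b hcomm hrel
end

section
/- Let R be a convex lattice path with marked points p₁,...,p_n on it (n ≥ 1), each marked point lying on some edge of R. Consider the abstract simplicial complex K of subsets H ⊆ {1,...,n} such that H does not contain two non-adjacent marked points lying on the same edge of R (adjacent meaning consecutive among the marked points of that edge). Then the reduced Euler characteristic of K vanishes: ∑_{H ∈ K} (−1)^{|H|} = 0 (the sum includes the empty set). -/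
/-!
The complex is the join, over the edges, of the complexes `pathFaces (m e)`: a face is
determined by its traces on the edges, and these traces can be chosen independently. The
signed face count `∑ (-1)^|H|` is multiplicative under joins, so it suffices that the factor of
an edge carrying at least one mark vanishes. There the faces are `∅`, the singletons and the
pairs `{j, j + 1}`, and toggling the element `t - 1`, where `t` is the largest mark present
(`t = 0` for the empty face), is a sign-reversing involution: it never changes `t`.
-/

open Finset

open scoped symmDiff

section Join

variable {ι : Type*} [DecidableEq ι] {α : ι → Type*} [∀ i, Fintype (α i)]
  [∀ i, DecidableEq (α i)]

def sigmaFiber (H : Finset (Σ i, α i)) (i : ι) : Finset (α i) :=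
  univ.filter fun a => (⟨i, a⟩ : Σ i, α i) ∈ H

@[simp]
lemma mem_sigmaFiber {H : Finset (Σ i, α i)} {i : ι} {a : α i} :
    a ∈ sigmaFiber H i ↔ (⟨i, a⟩ : Σ i, α i) ∈ H := by
  simp [sigmaFiber]

variable [Fintype ι]

lemma univ_sigma_sigmaFiber (H : Finset (Σ i, α i)) : univ.sigma (sigmaFiber H) = H := by
  ext ⟨i, a⟩
  simp

lemma sigmaFiber_univ_sigma (F : ∀ i, Finset (α i)) : sigmaFiber (univ.sigma F) = F := by
  ext i a
  simp

lemma card_eq_sum_card_sigmaFiber (H : Finset (Σ i, α i)) :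
    H.card = ∑ i, (sigmaFiber H i).card := by
  conv_lhs => rw [← univ_sigma_sigmaFiber H]
  exact card_sigma _ _

lemma sum_pow_card_join {R : Type*} [CommSemiring R] (K : ∀ i, Finset (Finset (α i))) (x : R) :
    ∑ H ∈ univ.filter (fun H : Finset (Σ i, α i) => ∀ i, sigmaFiber H i ∈ K i), x ^ H.card =
      ∏ i, ∑ A ∈ K i, x ^ A.card := by
  rw [prod_univ_sum]
  refine sum_nbij' sigmaFiber (univ.sigma ·) (fun H hH => ?_) (fun F _ => ?_)
    (fun H _ => univ_sigma_sigmaFiber H) (fun F _ => sigmaFiber_univ_sigma F) (fun H _ => ?_)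
  · simpa [Fintype.mem_piFinset] using hH
  · simpa [sigmaFiber_univ_sigma] using Fintype.mem_piFinset.mp ‹_›
  · rw [card_eq_sum_card_sigmaFiber, prod_pow_eq_pow_sum]

end Join

section Path

variable {n : ℕ}

/-- The faces of the path on the vertices `0, …, n - 1`. -/
def pathFaces (n : ℕ) : Finset (Finset (Fin n)) :=
  univ.filter fun A => ∀ j j' : Fin n, j ∈ A → j' ∈ A → (j : ℕ) < j' → (j' : ℕ) = j + 1

lemma mem_pathFaces_iff {A : Finset (Fin n)} :
    A ∈ pathFaces n ↔ ∀ j ∈ A, A.sup Fin.val ≤ j + 1 := by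
  simp only [pathFaces, mem_filter, mem_univ, true_and]
  constructor
  · intro hA j hj
    obtain ⟨k, hk, hsup⟩ := exists_mem_eq_sup A ⟨j, hj⟩ Fin.val
    rcases lt_or_ge (j : ℕ) k with hlt | hle
    · rw [hsup, hA j k hj hk hlt]
    · omega
  · intro hA j j' hj hj' hlt
    have := le_sup (f := Fin.val) hj'
    have := hA j hj
    omega

def pathPivot (hn : 0 < n) (A : Finset (Fin n)) : Fin n :=
  ⟨A.sup Fin.val - 1, by
    have : A.sup Fin.val ≤ n - 1 := Finset.sup_le fun j _ => by omega
    omega⟩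

variable (hn : 0 < n)

lemma sup_symmDiff_pathPivot (A : Finset (Fin n)) :
    (A ∆ {pathPivot hn A}).sup Fin.val = A.sup Fin.val := by
  apply le_antisymm
  · refine Finset.sup_le fun j hj => ?_
    rcases mem_symmDiff.mp hj with ⟨hjA, -⟩ | ⟨hjp, -⟩
    · exact le_sup hjA
    · rw [mem_singleton.mp hjp, pathPivot]
      exact Nat.sub_le _ _
  · rcases Nat.eq_zero_or_pos (A.sup Fin.val) with h0 | hpos
    · exact h0 ▸ Nat.zero_le _
    obtain ⟨k, hk, hsup⟩ := exists_mem_eq_sup A (nonempty_of_ne_empty (by rintro rfl; simp at hpos))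
      Fin.val
    have hkp : k ≠ pathPivot hn A := fun h => by
      have := congrArg Fin.val h
      simp only [pathPivot] at this
      omega
    rw [hsup]
    exact le_sup (f := Fin.val) (mem_symmDiff.mpr (Or.inl ⟨hk, by simpa using hkp⟩))

lemma pathPivot_symmDiff (A : Finset (Fin n)) :
    pathPivot hn (A ∆ {pathPivot hn A}) = pathPivot hn A :=
  Fin.ext (congrArg (· - 1) (sup_symmDiff_pathPivot hn A))

lemma symmDiff_pathPivot_mem_pathFaces {A : Finset (Fin n)} (hA : A ∈ pathFaces n) :
    A ∆ {pathPivot hn A} ∈ pathFaces n := by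
  rw [mem_pathFaces_iff, sup_symmDiff_pathPivot]
  intro j hj
  rcases mem_symmDiff.mp hj with ⟨hjA, -⟩ | ⟨hjp, -⟩
  · exact mem_pathFaces_iff.mp hA j hjA
  · simp only [mem_singleton.mp hjp, pathPivot]
    omega

end Path

lemma neg_one_pow_card_symmDiff_singleton {α : Type*} [DecidableEq α] (A : Finset α) (a : α) :
    (-1 : ℤ) ^ (A ∆ {a}).card = -(-1) ^ A.card := by
  by_cases ha : a ∈ A
  · have hA : A ∆ {a} = A.erase a := by
      ext x; by_cases hx : x = a <;> simp [mem_symmDiff, hx, ha]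
    rw [hA, ← card_erase_add_one ha, pow_succ]
    ring
  · have hA : A ∆ {a} = insert a A := by
      ext x; by_cases hx : x = a <;> simp [mem_symmDiff, hx, ha]
    rw [hA, card_insert_of_notMem ha, pow_succ]
    ring

lemma sum_pathFaces_neg_one_pow_card {n : ℕ} (hn : 0 < n) :
    ∑ A ∈ pathFaces n, (-1 : ℤ) ^ A.card = 0 := by
  refine sum_involution (fun A _ => A ∆ {pathPivot hn A}) (fun A _ => ?_) (fun A _ _ => ?_)
    (fun A hA => symmDiff_pathPivot_mem_pathFaces hn hA) (fun A _ => ?_)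
  · rw [neg_one_pow_card_symmDiff_singleton]
    ring
  · simp
  · simp only [pathPivot_symmDiff, symmDiff_symmDiff_cancel_right]

/-- Given finitely many edges carrying `m e` linearly ordered marked points each (with at
least one mark in total), the abstract simplicial complex of subsets containing no two
non-adjacent marks on a single edge has vanishing reduced Euler characteristic:
`∑_{H admissible} (-1)^{|H|} = 0` (the empty set included). -/
theorem convex_path_complex_euler_char (s : ℕ) (m : Fin s → ℕ) (hm : 0 < ∑ e, m e) :
    ∑ H ∈ (Finset.univ : Finset (Finset (Σ e : Fin s, Fin (m e)))).filter
        (fun H => ∀ (e : Fin s) (j j' : Fin (m e)),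
          (⟨e, j⟩ : Σ e : Fin s, Fin (m e)) ∈ H → (⟨e, j'⟩ : Σ e : Fin s, Fin (m e)) ∈ H →
            (j : ℕ) < (j' : ℕ) → (j' : ℕ) = (j : ℕ) + 1),
      (-1 : ℤ) ^ H.card = 0 := by
  obtain ⟨e₀, -, he₀⟩ := exists_ne_zero_of_sum_ne_zero hm.ne'
  calc _ = ∏ e, ∑ A ∈ pathFaces (m e), (-1 : ℤ) ^ A.card := by
        rw [← sum_pow_card_join]
        congr 1
        ext H
        simp [pathFaces]
    _ = 0 := prod_eq_zero (mem_univ e₀) (sum_pathFaces_neg_one_pow_card (Nat.pos_of_ne_zero he₀))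
end
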